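/- Let S₁, S₂, S₃ be symmetric positive definite n×n matrices, S = S₁+S₂+S₃, and define the deluxe edge average ū = S^{-1}(S₁u₁ + S₂u₂ + S₃u₃) for vectors u₁,u₂,u₃ ∈ ℝⁿ. Then (u₁ − ū)ᵀ S₁ (u₁ − ū) ≤ 3(u₁ᵀS₁u₁ + u₂ᵀS₂u₂ + u₃ᵀS₃u₃). -/

import Mathlib

/-!
Let `ū` solve `S ū = ∑ Sᵢ uᵢ` with `S = ∑ Sᵢ`. Expanding the squares and using this equation on
the cross terms gives the parallel-axis identity `∑ (uᵢ - ū)ᵀ Sᵢ (uᵢ - ū) = ∑ uᵢᵀ Sᵢ uᵢ - ūᵀ S ū`.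
Since every term on the left is nonnegative and `ūᵀ S ū ≥ 0`, each single energy
`(uⱼ - ū)ᵀ Sⱼ (uⱼ - ū)` is bounded by `∑ uᵢᵀ Sᵢ uᵢ`, which is the claim even with constant `1`.
-/

open Matrix

namespace Matrix

variable {m ι R : Type*} [Fintype m] [Fintype ι]

theorem IsSymm.dotProduct_mulVec_comm [CommSemiring R] {A : Matrix m m R} (hA : A.IsSymm)
    (x y : m → R) : x ⬝ᵥ A *ᵥ y = y ⬝ᵥ A *ᵥ x := by
  rw [dotProduct_mulVec, ← mulVec_transpose, hA.eq, dotProduct_comm]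

theorem IsSymm.sub_dotProduct_mulVec_sub [CommRing R] {A : Matrix m m R} (hA : A.IsSymm)
    (x z : m → R) :
    (x - z) ⬝ᵥ A *ᵥ (x - z) = x ⬝ᵥ A *ᵥ x - 2 * (z ⬝ᵥ A *ᵥ x) + z ⬝ᵥ A *ᵥ z := by
  rw [mulVec_sub, dotProduct_sub, sub_dotProduct, sub_dotProduct, hA.dotProduct_mulVec_comm x z]
  ring

theorem sum_sub_dotProduct_mulVec_sub_of_mulVec_eq [CommRing R] (S : ι → Matrix m m R)
    (hS : ∀ i, (S i).IsSymm) (u : ι → m → R) {v : m → R}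
    (hv : (∑ i, S i) *ᵥ v = ∑ i, S i *ᵥ u i) :
    ∑ i, (u i - v) ⬝ᵥ S i *ᵥ (u i - v) = ∑ i, u i ⬝ᵥ S i *ᵥ u i - v ⬝ᵥ (∑ i, S i) *ᵥ v := by
  have hcross : ∑ i, v ⬝ᵥ S i *ᵥ u i = v ⬝ᵥ (∑ i, S i) *ᵥ v := by
    rw [hv, dotProduct_sum]
  have hdiag : ∑ i, v ⬝ᵥ S i *ᵥ v = v ⬝ᵥ (∑ i, S i) *ᵥ v := by
    rw [sum_mulVec, dotProduct_sum]
  simp only [fun i => (hS i).sub_dotProduct_mulVec_sub (u i) v, Finset.sum_add_distrib,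
    Finset.sum_sub_distrib, ← Finset.mul_sum, hcross, hdiag]
  ring

theorem sub_dotProduct_mulVec_sub_le_sum_of_mulVec_eq [CommRing R] [PartialOrder R]
    [IsOrderedRing R] [StarRing R] [TrivialStar R] (S : ι → Matrix m m R)
    (hS : ∀ i, (S i).PosSemidef) (u : ι → m → R) {v : m → R}
    (hv : (∑ i, S i) *ᵥ v = ∑ i, S i *ᵥ u i) (j : ι) :
    (u j - v) ⬝ᵥ S j *ᵥ (u j - v) ≤ ∑ i, u i ⬝ᵥ S i *ᵥ u i := by
  have hsymm (i : ι) : (S i).IsSymm := by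
    simpa [IsSymm, conjTranspose_eq_transpose_of_trivial] using (hS i).isHermitian.eq
  have hnonneg (A : Matrix m m R) (hA : A.PosSemidef) (x : m → R) : 0 ≤ x ⬝ᵥ A *ᵥ x := by
    simpa using hA.dotProduct_mulVec_nonneg x
  calc (u j - v) ⬝ᵥ S j *ᵥ (u j - v) ≤ ∑ i, (u i - v) ⬝ᵥ S i *ᵥ (u i - v) :=
        Finset.single_le_sum (fun i _ => hnonneg _ (hS i) (u i - v)) (Finset.mem_univ j)
    _ = ∑ i, u i ⬝ᵥ S i *ᵥ u i - v ⬝ᵥ (∑ i, S i) *ᵥ v :=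
        sum_sub_dotProduct_mulVec_sub_of_mulVec_eq S hsymm u hv
    _ ≤ ∑ i, u i ⬝ᵥ S i *ᵥ u i :=
        sub_le_self _ (hnonneg _ (posSemidef_sum _ fun i _ => hS i) v)

end Matrix

/-- Deluxe edge-average bound for three subdomains sharing an edge. -/
theorem deluxe_edge_average_bound (n : ℕ)
    (S1 S2 S3 : Matrix (Fin n) (Fin n) ℝ)
    (h1 : S1.PosDef) (h2 : S2.PosDef) (h3 : S3.PosDef)
    (u1 u2 u3 : Fin n → ℝ) :
    let S := S1 + S2 + S3
    let ubar := S⁻¹ *ᵥ (S1 *ᵥ u1 + S2 *ᵥ u2 + S3 *ᵥ u3)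
    (u1 - ubar) ⬝ᵥ S1 *ᵥ (u1 - ubar)
      ≤ 3 * (u1 ⬝ᵥ S1 *ᵥ u1 + u2 ⬝ᵥ S2 *ᵥ u2 + u3 ⬝ᵥ S3 *ᵥ u3) := by
  intro S ubar
  have hS : S.PosDef := (h1.add_posSemidef h2.posSemidef).add_posSemidef h3.posSemidef
  have hubar : S *ᵥ ubar = S1 *ᵥ u1 + S2 *ᵥ u2 + S3 *ᵥ u3 := by
    rw [mulVec_mulVec, mul_nonsing_inv _ (isUnit_iff_isUnit_det S |>.mp hS.isUnit), one_mulVec]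
  have hpsd : ∀ i, (![S1, S2, S3] i).PosSemidef := by
    intro i; fin_cases i
    exacts [h1.posSemidef, h2.posSemidef, h3.posSemidef]
  have hbound := sub_dotProduct_mulVec_sub_le_sum_of_mulVec_eq ![S1, S2, S3] hpsd ![u1, u2, u3]
    (v := ubar) (by simpa [Fin.sum_univ_three] using hubar) 0
  have henergy : 0 ≤ ∑ i, ![u1, u2, u3] i ⬝ᵥ ![S1, S2, S3] i *ᵥ ![u1, u2, u3] i :=
    le_trans (by simpa using h1.posSemidef.dotProduct_mulVec_nonneg (u1 - ubar)) hbound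
  simp only [Fin.sum_univ_three, Matrix.cons_val_zero, Matrix.cons_val_one, Matrix.cons_val_two,
    Matrix.head_cons, Matrix.tail_cons] at hbound henergy
  linarith
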